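/- arXiv:2403.09604 — 6 statements merged into one kernel-verified Lean document; each statement's English description precedes it below -/
import Mathlib

section
/- Let p, h ≥ 1 and d = p + h. Let Γ ∈ ℝ^{d×d} be symmetric, and let Θ ∈ ℝ^{d×d} be a symmetric positive semidefinite matrix whose kernel is exactly the span of 𝟙_d, such that Π_d(−Γ/2)Π_d is the Moore–Penrose pseudoinverse of Θ. Write Θ in blocks Θ_O, Θ_{OH}, Θ_{HO}, Θ_H, let Γ_O = Γ_O be the top-left p×p block of Γ, and assume Θ_H is invertible. Then Θ_O − Θ_{OH}Θ_H^{-1}Θ_{HO} is the Moore–Penrose pseudoinverse of Π_p(−Γ_O/2)Π_p, i.e. (Π_p(−Γ_O/2)Π_p)⁺ = Θ_O − Θ_{OH}Θ_H^{-1}Θ_{HO}. -/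
open Matrix

noncomputable section

/-- `X` is the Moore–Penrose pseudoinverse of `A`. -/
def IsMoorePenrose {m : Type*} [Fintype m] (A X : Matrix m m ℝ) : Prop :=
  A * X * A = A ∧ X * A * X = X ∧ (A * X)ᵀ = A * X ∧ (X * A)ᵀ = X * A

/-- The all-ones matrix `𝟙𝟙ᵀ`. -/
def onesMat (ι : Type*) : Matrix ι ι ℝ := Matrix.of fun _ _ => (1 : ℝ)

/-- The orthogonal projection `Π = I − (1/d)𝟙𝟙ᵀ` onto the orthogonal complement of the
all-ones vector. -/
def projMat (ι : Type*) [Fintype ι] [DecidableEq ι] : Matrix ι ι ℝ :=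
  1 - (Fintype.card ι : ℝ)⁻¹ • onesMat ι

section Helpers
variable {ι : Type*} [Fintype ι] [DecidableEq ι]

lemma projMat_transpose : (projMat ι)ᵀ = projMat ι := by
  ext i j
  simp [projMat, onesMat, Matrix.one_apply, eq_comm]

lemma projMat_row_sum (hc : (Fintype.card ι : ℝ) ≠ 0) (i : ι) :
    ∑ k, projMat ι i k = 0 := by
  simp [projMat, onesMat, Matrix.one_apply, Finset.sum_sub_distrib]
  field_simp
  norm_num

lemma projMat_col_sum (hc : (Fintype.card ι : ℝ) ≠ 0) (j : ι) :
    ∑ k, projMat ι k j = 0 := by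
  simp [projMat, onesMat, Matrix.one_apply, Finset.sum_sub_distrib, eq_comm]
  field_simp
  norm_num

lemma projMat_mul_const {β : Type*} [Fintype β] (hc : (Fintype.card ι : ℝ) ≠ 0)
    (f : β → ℝ) : projMat ι * Matrix.of (fun (_ : ι) (j : β) => f j) = 0 := by
  ext i j
  rw [Matrix.mul_apply]
  simp only [Matrix.of_apply, Matrix.zero_apply]
  rw [← Finset.sum_mul, projMat_row_sum hc, zero_mul]

lemma const_mul_projMat {β : Type*} [Fintype β] (hc : (Fintype.card ι : ℝ) ≠ 0)
    (f : β → ℝ) : Matrix.of (fun (i : β) (_ : ι) => f i) * projMat ι = 0 := by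
  ext i j
  rw [Matrix.mul_apply]
  simp only [Matrix.of_apply, Matrix.zero_apply]
  rw [← Finset.mul_sum, projMat_col_sum hc, mul_zero]

lemma projMat_mul_projMat (hc : (Fintype.card ι : ℝ) ≠ 0) :
    projMat ι * projMat ι = projMat ι := by
  conv_lhs => rw [show projMat ι * projMat ι
    = projMat ι * 1 - (Fintype.card ι : ℝ)⁻¹ • (projMat ι * onesMat ι) by
      rw [projMat]; rw [Matrix.mul_sub, Matrix.mul_smul]]
  rw [show projMat ι * onesMat ι = 0 from projMat_mul_const hc (fun _ => 1)]
  simp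

end Helpers

/-- **Theorem 2 (marginal precision matrix of a latent Hüsler–Reiss model).**
If `Θ` is symmetric PSD with kernel exactly `span 𝟙_d`, `Π_d(−Γ/2)Π_d = Θ⁺`, and `Θ_H` is
invertible, then `(Π_p(−Γ_O/2)Π_p)⁺ = Θ_O − Θ_{OH}Θ_H⁻¹Θ_{HO}`. -/
theorem marginal_precision_schur_complement
    (p h : ℕ) (hp : 1 ≤ p) (hh : 1 ≤ h)
    (Γ Θ : Matrix (Fin p ⊕ Fin h) (Fin p ⊕ Fin h) ℝ)
    (hΓsym : Γ.IsSymm)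
    (hΘpsd : Θ.PosSemidef)
    (hker : ∀ v : (Fin p ⊕ Fin h) → ℝ,
      Θ.mulVec v = 0 ↔ ∃ c : ℝ, v = c • (fun _ => (1 : ℝ)))
    (hpinv : IsMoorePenrose Θ
      (projMat (Fin p ⊕ Fin h) * ((-(1/2 : ℝ)) • Γ) * projMat (Fin p ⊕ Fin h)))
    (hH : IsUnit (Θ.toBlocks₂₂).det) :
    IsMoorePenrose
      (projMat (Fin p) * ((-(1/2 : ℝ)) • Γ.toBlocks₁₁) * projMat (Fin p))
      (Θ.toBlocks₁₁ - Θ.toBlocks₁₂ * (Θ.toBlocks₂₂)⁻¹ * Θ.toBlocks₂₁) := by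
  classical
  set Pi := projMat (Fin p ⊕ Fin h) with hPidef
  set pri := projMat (Fin p) with hpridef
  set G := ((-(1/2 : ℝ)) • Γ) with hGdef
  set Sg := Pi * G * Pi with hSgdef
  obtain ⟨m1, m2, m3, m4⟩ := hpinv
  have hcard_d : (Fintype.card (Fin p ⊕ Fin h) : ℝ) ≠ 0 := by
    simp only [Fintype.card_sum, Fintype.card_fin]
    have : p + h ≠ 0 := by omega
    exact_mod_cast this
  have hcard_p : (Fintype.card (Fin p) : ℝ) ≠ 0 := by
    simp only [Fintype.card_fin]
    have : p ≠ 0 := by omega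
    exact_mod_cast this
  have hΘt : Θᵀ = Θ := by simpa using hΘpsd.1.eq
  have hGt : Gᵀ = G := by rw [hGdef, Matrix.transpose_smul, hΓsym]
  have hPit : Piᵀ = Pi := projMat_transpose
  have hprit : priᵀ = pri := projMat_transpose
  have hSgt : Sgᵀ = Sg := by
    rw [hSgdef, Matrix.transpose_mul, Matrix.transpose_mul, hPit, hGt, mul_assoc]
  have hPiPi : Pi * Pi = Pi := projMat_mul_projMat hcard_d
  have hpripri : pri * pri = pri := projMat_mul_projMat hcard_p
  have hPiSg : Pi * Sg = Sg := by
    rw [hSgdef, ← mul_assoc, ← mul_assoc, hPiPi]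
  -- key : Sg * Θ = Pi
  have hθM : Θ * (1 - Sg * Θ) = 0 := by
    rw [mul_sub, mul_one, ← mul_assoc, m1, sub_self]
  have hQMP : Pi * (1 - Sg * Θ) = 0 := by
    ext i j
    have hcol : Θ.mulVec (fun k => (1 - Sg * Θ) k j) = 0 := by
      funext i'
      have := congrFun (congrFun hθM i') j
      simpa [Matrix.mul_apply, Matrix.mulVec, dotProduct] using this
    obtain ⟨c, hc⟩ := (hker _).1 hcol
    have hent : ∀ k, (1 - Sg * Θ) k j = c := fun k => by
      have := congrFun hc k; simpa using this
    rw [Matrix.mul_apply]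
    simp only [Matrix.zero_apply]
    calc ∑ k, Pi i k * (1 - Sg * Θ) k j = ∑ k, Pi i k * c := by simp_rw [hent]
    _ = (∑ k, Pi i k) * c := by rw [Finset.sum_mul]
    _ = 0 := by rw [projMat_row_sum hcard_d, zero_mul]
  have key : Sg * Θ = Pi := by
    have h1' : Pi * (Sg * Θ) = Pi := by
      have := hQMP
      rw [mul_sub, mul_one, sub_eq_zero] at this
      exact this.symm
    have h2' : Pi * (Sg * Θ) = Sg * Θ := by rw [← mul_assoc, hPiSg]
    rw [← h2', h1']
  have key2 : Θ * Sg = Pi := by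
    have := congrArg Matrix.transpose key
    rwa [Matrix.transpose_mul, hSgt, hΘt, hPit] at this
  -- block structure of Pi
  set c := (Fintype.card (Fin p ⊕ Fin h) : ℝ)⁻¹ with hcdef
  have hPifb : Pi = fromBlocks
      (1 - c • Matrix.of (fun (_ : Fin p) (_ : Fin p) => (1:ℝ)))
      (-(c • Matrix.of (fun (_ : Fin p) (_ : Fin h) => (1:ℝ))))
      (-(c • Matrix.of (fun (_ : Fin h) (_ : Fin p) => (1:ℝ))))
      (1 - c • Matrix.of (fun (_ : Fin h) (_ : Fin h) => (1:ℝ))) := by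
    ext (i|i) (j|j) <;>
      simp [hPidef, hcdef, projMat, onesMat, fromBlocks, Matrix.one_apply,
        Fintype.card_sum, Fintype.card_fin, Nat.cast_add]
  -- block equations from Θ * Sg = Pi
  set T11 := Θ.toBlocks₁₁ with hT11def
  set T12 := Θ.toBlocks₁₂ with hT12def
  set T21 := Θ.toBlocks₂₁ with hT21def
  set T22 := Θ.toBlocks₂₂ with hT22def
  set S11 := Sg.toBlocks₁₁ with hS11def
  set S21 := Sg.toBlocks₂₁ with hS21def
  have hfb : fromBlocks T11 T12 T21 T22 * fromBlocks S11 Sg.toBlocks₁₂ S21 Sg.toBlocks₂₂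
      = Pi := by
    rw [hT11def, hT12def, hT21def, hT22def, hS11def, hS21def,
      Matrix.fromBlocks_toBlocks, Matrix.fromBlocks_toBlocks]
    exact key2
  rw [Matrix.fromBlocks_multiply, hPifb] at hfb
  have e11 : T11 * S11 + T12 * S21
      = 1 - c • Matrix.of (fun (_ : Fin p) (_ : Fin p) => (1:ℝ)) := by
    have := congrArg Matrix.toBlocks₁₁ hfb
    simpa [Matrix.toBlocks_fromBlocks₁₁] using this
  have e21 : T21 * S11 + T22 * S21
      = -(c • Matrix.of (fun (_ : Fin h) (_ : Fin p) => (1:ℝ))) := by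
    have := congrArg Matrix.toBlocks₂₁ hfb
    simpa [Matrix.toBlocks_fromBlocks₂₁] using this
  set S := T11 - T12 * T22⁻¹ * T21 with hSdef
  have hinv : T22⁻¹ * T22 = 1 := Matrix.nonsing_inv_mul _ hH
  -- S * S11 computation
  have hA : T11 * S11 = (1 - c • Matrix.of (fun (_ : Fin p) (_ : Fin p) => (1:ℝ))) - T12 * S21 :=
    eq_sub_of_add_eq e11
  have hB : T21 * S11 = (-(c • Matrix.of (fun (_ : Fin h) (_ : Fin p) => (1:ℝ)))) - T22 * S21 :=
    eq_sub_of_add_eq e21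
  have hSS11 : S * S11
      = (1 - c • Matrix.of (fun (_ : Fin p) (_ : Fin p) => (1:ℝ)))
        - T12 * T22⁻¹ * (-(c • Matrix.of (fun (_ : Fin h) (_ : Fin p) => (1:ℝ)))) := by
    have hmid : T12 * T22⁻¹ * (T22 * S21) = T12 * S21 := by
      rw [Matrix.mul_assoc, ← Matrix.mul_assoc T22⁻¹, hinv, Matrix.one_mul]
    calc S * S11 = T11 * S11 - T12 * T22⁻¹ * (T21 * S11) := by
          rw [hSdef, Matrix.sub_mul, Matrix.mul_assoc]
      _ = ((1 - c • Matrix.of (fun (_ : Fin p) (_ : Fin p) => (1:ℝ))) - T12 * S21)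
          - (T12 * T22⁻¹ * (-(c • Matrix.of (fun (_ : Fin h) (_ : Fin p) => (1:ℝ))))
            - T12 * S21) := by
          rw [hA, hB, Matrix.mul_sub, hmid]
      _ = _ := by abel
  -- multiply by pri on the right
  have hJpp : Matrix.of (fun (_ : Fin p) (_ : Fin p) => (1:ℝ)) * pri = 0 :=
    const_mul_projMat hcard_p (fun _ => 1)
  have hJhp : Matrix.of (fun (_ : Fin h) (_ : Fin p) => (1:ℝ)) * pri = 0 :=
    const_mul_projMat hcard_p (fun _ => 1)
  have hkey1 : S * S11 * pri = pri := by
    rw [hSS11, Matrix.sub_mul, Matrix.sub_mul, one_mul, Matrix.smul_mul, hJpp,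
      Matrix.mul_assoc, Matrix.neg_mul, Matrix.smul_mul, hJhp]
    simp
  -- symmetry of blocks and S
  have hT11t : T11ᵀ = T11 := by
    rw [hT11def, show Θ.toBlocks₁₁ᵀ = (Θᵀ).toBlocks₁₁ from rfl, hΘt]
  have hT22t : T22ᵀ = T22 := by
    rw [hT22def, show Θ.toBlocks₂₂ᵀ = (Θᵀ).toBlocks₂₂ from rfl, hΘt]
  have hT12t : T12ᵀ = T21 := by
    rw [hT12def, hT21def, show Θ.toBlocks₁₂ᵀ = (Θᵀ).toBlocks₂₁ from rfl, hΘt]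
  have hT21t : T21ᵀ = T12 := by
    rw [hT21def, hT12def, show Θ.toBlocks₂₁ᵀ = (Θᵀ).toBlocks₁₂ from rfl, hΘt]
  have hS11t : S11ᵀ = S11 := by
    rw [hS11def, show Sg.toBlocks₁₁ᵀ = (Sgᵀ).toBlocks₁₁ from rfl, hSgt]
  have hSt : Sᵀ = S := by
    rw [hSdef, Matrix.transpose_sub, Matrix.transpose_mul, Matrix.transpose_mul,
      Matrix.transpose_nonsing_inv, hT11t, hT12t, hT21t, hT22t, Matrix.mul_assoc]
  have hkey2 : pri * S11 * S = pri := by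
    have := congrArg Matrix.transpose hkey1
    rwa [Matrix.transpose_mul, Matrix.transpose_mul, hSt, hS11t, hprit,
      ← Matrix.mul_assoc] at this
  -- S *ᵥ 𝟙 = 0
  have honed : Θ *ᵥ (fun _ => (1:ℝ)) = 0 := by
    refine (hker (fun _ => 1)).2 ⟨1, ?_⟩
    funext x; simp
  have helim : (fun _ : Fin p ⊕ Fin h => (1:ℝ))
      = Sum.elim (fun _ : Fin p => (1:ℝ)) (fun _ : Fin h => (1:ℝ)) := by
    funext x; cases x <;> rfl
  have honed' : fromBlocks T11 T12 T21 T22 *ᵥ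
      Sum.elim (fun _ : Fin p => (1:ℝ)) (fun _ : Fin h => (1:ℝ)) = 0 := by
    rw [hT11def, hT12def, hT21def, hT22def, Matrix.fromBlocks_toBlocks, ← helim]
    exact honed
  rw [Matrix.fromBlocks_mulVec] at honed'
  have eO : T11 *ᵥ (fun _ => (1:ℝ)) + T12 *ᵥ (fun _ => (1:ℝ)) = 0 := by
    funext i
    have := congrFun honed' (Sum.inl i)
    simpa [Function.comp_def] using this
  have eH : T21 *ᵥ (fun _ => (1:ℝ)) + T22 *ᵥ (fun _ => (1:ℝ)) = 0 := by
    funext i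
    have := congrFun honed' (Sum.inr i)
    simpa [Function.comp_def] using this
  have hSone : S *ᵥ (fun _ => (1:ℝ)) = 0 := by
    have h21 : T21 *ᵥ (fun _ => (1:ℝ)) = -(T22 *ᵥ (fun _ => (1:ℝ))) :=
      eq_neg_of_add_eq_zero_left eH
    rw [hSdef, Matrix.sub_mulVec, ← Matrix.mulVec_mulVec, ← Matrix.mulVec_mulVec, h21,
      Matrix.mulVec_neg, Matrix.mulVec_mulVec, hinv, Matrix.one_mulVec,
      Matrix.mulVec_neg, sub_neg_eq_add, eO]
  have hJS : Matrix.of (fun (_ : Fin p) (_ : Fin p) => (1:ℝ)) * S = 0 := by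
    ext i j
    rw [Matrix.mul_apply]
    simp only [Matrix.of_apply, one_mul, Matrix.zero_apply]
    calc ∑ k, S k j = ∑ k, S j k := by
          refine Finset.sum_congr rfl fun k _ => ?_
          have := congrFun (congrFun hSt j) k
          simpa using this
    _ = 0 := by simpa [Matrix.mulVec, dotProduct] using congrFun hSone j
  have hpriS : pri * S = S := by
    rw [hpridef, projMat, Matrix.sub_mul, one_mul, Matrix.smul_mul,
      show onesMat (Fin p) * S = 0 from hJS, smul_zero, sub_zero]
  have hSpri : S * pri = S := by
    have := congrArg Matrix.transpose hpriS
    rwa [Matrix.transpose_mul, hSt, hprit] at this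
  -- expansion of Sg and reduction of the 11 block
  set J := onesMat (Fin p ⊕ Fin h) with hJdef
  have hSgexp : Sg = G - c • (J * G) - c • (G * J) + (c*c) • (J * (G * J)) := by
    rw [hSgdef, hPidef, projMat, ← hcdef, ← hJdef]
    simp only [Matrix.sub_mul, Matrix.mul_sub, Matrix.one_mul, Matrix.mul_one,
      Matrix.smul_mul, Matrix.mul_smul, smul_smul, Matrix.mul_assoc]
    module
  have hS11exp : S11 = G.toBlocks₁₁ - c • (J * G).toBlocks₁₁ - c • (G * J).toBlocks₁₁
      + (c*c) • (J * (G * J)).toBlocks₁₁ := by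
    rw [hS11def, hSgexp]; rfl
  have hJG : (J * G).toBlocks₁₁
      = Matrix.of (fun (_ : Fin p) (j : Fin p) => ∑ k, G k (Sum.inl j)) := by
    ext i j
    simp [Matrix.toBlocks₁₁, Matrix.mul_apply, hJdef, onesMat]
  have hGJ : (G * J).toBlocks₁₁
      = Matrix.of (fun (i : Fin p) (_ : Fin p) => ∑ k, G (Sum.inl i) k) := by
    ext i j
    simp [Matrix.toBlocks₁₁, Matrix.mul_apply, hJdef, onesMat]
  have hJGJ : (J * (G * J)).toBlocks₁₁
      = Matrix.of (fun (_ : Fin p) (_ : Fin p) => ∑ k, ∑ l, G k l) := by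
    ext i j
    simp [Matrix.toBlocks₁₁, Matrix.mul_apply, hJdef, onesMat, Finset.sum_mul,
      Finset.mul_sum]
  have z1 : pri * (c • (J * G).toBlocks₁₁) = 0 := by
    rw [Matrix.mul_smul, hJG, hpridef, projMat_mul_const hcard_p, smul_zero]
  have z2 : (c • (G * J).toBlocks₁₁) * pri = 0 := by
    rw [Matrix.smul_mul, hGJ, hpridef, const_mul_projMat hcard_p, smul_zero]
  have z3 : pri * ((c*c) • (J * (G * J)).toBlocks₁₁) = 0 := by
    rw [Matrix.mul_smul, hJGJ, hpridef, projMat_mul_const hcard_p, smul_zero]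
  have hexch : pri * S11 * pri = pri * G.toBlocks₁₁ * pri := by
    rw [hS11exp, Matrix.mul_add, Matrix.mul_sub, Matrix.mul_sub, z1, z3, sub_zero,
      add_zero, Matrix.sub_mul, Matrix.mul_assoc pri (c • (G * J).toBlocks₁₁) pri, z2,
      Matrix.mul_zero, sub_zero]
  have hG11 : G.toBlocks₁₁ = (-(1/2 : ℝ)) • Γ.toBlocks₁₁ := rfl
  have hBm : pri * ((-(1/2 : ℝ)) • Γ.toBlocks₁₁) * pri = pri * S11 * pri := by
    rw [hexch, hG11]
  -- assembly
  have hBS : (pri * ((-(1/2 : ℝ)) • Γ.toBlocks₁₁) * pri) * S = pri := by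
    rw [hBm, Matrix.mul_assoc (pri * S11) pri S, hpriS]
    exact hkey2
  have hSB : S * (pri * ((-(1/2 : ℝ)) • Γ.toBlocks₁₁) * pri) = pri := by
    rw [hBm, ← Matrix.mul_assoc, ← Matrix.mul_assoc, hSpri]
    exact hkey1
  have hpriB : pri * (pri * ((-(1/2 : ℝ)) • Γ.toBlocks₁₁) * pri)
      = pri * ((-(1/2 : ℝ)) • Γ.toBlocks₁₁) * pri := by
    rw [← Matrix.mul_assoc, ← Matrix.mul_assoc, hpripri]
  refine ⟨?_, ?_, ?_, ?_⟩
  · rw [hBS]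
    exact hpriB
  · rw [hSB]
    exact hpriS
  · rw [hBS]
    exact hprit
  · rw [hSB]
    exact hprit
end
end

section
/- Let A, B ∈ ℝ^{d×d} be symmetric matrices such that A + B is invertible and the column spaces of A and B are orthogonal to one another (equivalently, since A and B are symmetric, A·B = 0). Then (A + B)^{-1} = A⁺ + B⁺, where A⁺ and B⁺ are the Moore–Penrose pseudoinverses of A and B. -/
open Matrix

noncomputable section

/-- **Lemma (pseudoinverse of a sum with orthogonal column spaces).**
If `A, B` are symmetric, `A + B` is invertible, and the column spaces of `A` and `B` are
orthogonal, then `(A + B)⁻¹ = A⁺ + B⁺`. -/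
theorem inv_add_eq_pinv_add_pinv
    (d : ℕ) (A B : Matrix (Fin d) (Fin d) ℝ)
    (hAsym : A.IsSymm) (hBsym : B.IsSymm)
    (hinv : IsUnit (A + B).det)
    (horth : ∀ x y : Fin d → ℝ,
      (∃ u, x = A.mulVec u) → (∃ v, y = B.mulVec v) → x ⬝ᵥ y = 0)
    (X Y : Matrix (Fin d) (Fin d) ℝ)
    (hX : IsMoorePenrose A X) (hY : IsMoorePenrose B Y) :
    (A + B)⁻¹ = X + Y := by
  obtain ⟨hX1, hX2, hX3, hX4⟩ := hX
  obtain ⟨hY1, hY2, hY3, hY4⟩ := hY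
  have hAB : A * B = 0 := by
    ext j k
    have h := horth (A.mulVec (Pi.single j 1)) (B.mulVec (Pi.single k 1))
      ⟨_, rfl⟩ ⟨_, rfl⟩
    simp only [mulVec_single, mul_one, dotProduct, MulOpposite.op_one, one_smul, col_apply] at h
    simp only [mul_apply, Matrix.zero_apply]
    rw [← h]
    refine Finset.sum_congr rfl fun i _ => ?_
    rw [hAsym.apply]
  have hBA : B * A = 0 := by
    have h := congrArg Matrix.transpose hAB
    rwa [transpose_mul, hAsym.eq, hBsym.eq, transpose_zero] at h
  -- Y * B = B * Yᵀ  and  X * A = A * Xᵀ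
  have hYB : Y * B = B * Yᵀ := by
    rw [← hY4, transpose_mul, hBsym.eq]
  have hXA : X * A = A * Xᵀ := by
    rw [← hX4, transpose_mul, hAsym.eq]
  have hAY : A * Y = 0 := by
    calc A * Y = A * (Y * B * Y) := by rw [hY2]
    _ = A * B * (Yᵀ * Y) := by rw [hYB]; noncomm_ring
    _ = 0 := by rw [hAB, zero_mul]
  have hBX : B * X = 0 := by
    calc B * X = B * (X * A * X) := by rw [hX2]
    _ = B * A * (Xᵀ * X) := by rw [hXA]; noncomm_ring
    _ = 0 := by rw [hBA, zero_mul]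
  have hAXB : A * X * B = 0 := by
    rw [← hX3, transpose_mul, hAsym.eq, mul_assoc, hAB, mul_zero]
  have hBYA : B * Y * A = 0 := by
    rw [← hY3, transpose_mul, hBsym.eq, mul_assoc, hBA, mul_zero]
  have key : (A + B) * (X + Y) * (A + B) = A + B := by
    have expand : (A + B) * (X + Y) * (A + B)
        = A * X * A + A * X * B + A * Y * A + A * Y * B
          + (B * X * A + B * X * B + B * Y * A + B * Y * B) := by
      noncomm_ring
    rw [expand, hAY, hBX, hAXB, hBYA, hX1, hY1]
    simp
  have h1 := Matrix.nonsing_inv_mul (A + B) hinv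
  have h2 := Matrix.mul_nonsing_inv (A + B) hinv
  calc (A + B)⁻¹ = (A + B)⁻¹ * ((A + B) * (X + Y) * (A + B)) * (A + B)⁻¹ := by
        rw [key, h1, one_mul]
  _ = X + Y := by
        rw [← mul_assoc, ← mul_assoc, h1, one_mul, mul_assoc, h2, mul_one]
end
end

section
/- Let p, h ≥ 1 and d = p + h. Let Θ ∈ ℝ^{d×d} be a symmetric positive semidefinite matrix whose kernel is exactly the span of 𝟙_d, written in blocks Θ_O, Θ_{OH}, Θ_{HO}, Θ_H, and assume Θ_H is invertible. Then the kernel of the Schur complement S := Θ_O − Θ_{OH}Θ_H^{-1}Θ_{HO} is exactly the span of 𝟙_p (a one-dimensional subspace of ℝ^p). -/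
open Matrix

noncomputable section

/-- **Lemma (kernel of the Schur complement).**
If `Θ` is symmetric PSD with kernel exactly `span 𝟙_d` and `Θ_H` invertible, then the kernel of
the Schur complement `S = Θ_O − Θ_{OH}Θ_H⁻¹Θ_{HO}` is exactly the span of `𝟙_p`. -/
theorem schur_complement_kernel
    (p h : ℕ) (hp : 1 ≤ p) (hh : 1 ≤ h)
    (Θ : Matrix (Fin p ⊕ Fin h) (Fin p ⊕ Fin h) ℝ)
    (hΘpsd : Θ.PosSemidef)
    (hker : ∀ v : (Fin p ⊕ Fin h) → ℝ,
      Θ.mulVec v = 0 ↔ ∃ c : ℝ, v = c • (fun _ => (1 : ℝ)))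
    (hH : IsUnit (Θ.toBlocks₂₂).det) :
    ∀ v : Fin p → ℝ,
      (Θ.toBlocks₁₁ - Θ.toBlocks₁₂ * (Θ.toBlocks₂₂)⁻¹ * Θ.toBlocks₂₁).mulVec v = 0
        ↔ ∃ c : ℝ, v = c • (fun _ => (1 : ℝ)) := by
  set A := Θ.toBlocks₁₁ with hA
  set B := Θ.toBlocks₁₂ with hB
  set C := Θ.toBlocks₂₁ with hC
  set D := Θ.toBlocks₂₂ with hD
  have hDD : D * D⁻¹ = 1 := Matrix.mul_nonsing_inv D hH
  have hDD' : D⁻¹ * D = 1 := Matrix.nonsing_inv_mul D hH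
  have hblocks : Matrix.fromBlocks A B C D = Θ := Matrix.fromBlocks_toBlocks Θ
  intro v
  constructor
  · intro hv
    set w : Fin h → ℝ := -(D⁻¹.mulVec (C.mulVec v)) with hw
    have hBw : B.mulVec w = -((B * D⁻¹ * C).mulVec v) := by
      rw [hw, Matrix.mulVec_neg, Matrix.mulVec_mulVec, Matrix.mulVec_mulVec,
        Matrix.mul_assoc]
    have hu : Θ.mulVec (Sum.elim v w) = 0 := by
      rw [← hblocks, Matrix.fromBlocks_mulVec]
      have h1 : A.mulVec v + B.mulVec w = 0 := by
        rw [hBw]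
        have := hv
        rw [Matrix.sub_mulVec] at this
        linear_combination (norm := module) this
      have h2 : C.mulVec v + D.mulVec w = 0 := by
        rw [hw, Matrix.mulVec_neg, Matrix.mulVec_mulVec, hDD, Matrix.one_mulVec]
        abel
      funext x
      cases x with
      | inl i => simpa using congrFun h1 i
      | inr j => simpa using congrFun h2 j
    obtain ⟨c, hc⟩ := (hker _).mp hu
    exact ⟨c, funext fun i => by simpa using congrFun hc (Sum.inl i)⟩
  · rintro ⟨c, rfl⟩
    have hone : Θ.mulVec (fun _ => (1 : ℝ)) = 0 := by
      refine (hker _).mpr ⟨1, ?_⟩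
      funext x; simp
    have helim : (Sum.elim (fun _ => (1 : ℝ)) (fun _ => (1 : ℝ)) :
        (Fin p ⊕ Fin h) → ℝ) = fun _ => 1 := by
      funext x; cases x <;> rfl
    have hu : (Matrix.fromBlocks A B C D).mulVec
        (Sum.elim (fun _ => (1 : ℝ)) (fun _ => (1 : ℝ))) = 0 := by
      rw [helim, hblocks, hone]
    rw [Matrix.fromBlocks_mulVec] at hu
    have h1 : A.mulVec (fun _ => (1 : ℝ)) + B.mulVec (fun _ => (1 : ℝ)) = 0 := by
      funext i; simpa [Function.comp_def] using congrFun hu (Sum.inl i)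
    have h2 : C.mulVec (fun _ => (1 : ℝ)) + D.mulVec (fun _ => (1 : ℝ)) = 0 := by
      funext j; simpa [Function.comp_def] using congrFun hu (Sum.inr j)
    have hC1 : C.mulVec (fun _ => (1 : ℝ)) = -(D.mulVec (fun _ => (1 : ℝ))) := by
      linear_combination (norm := module) h2
    have key : (B * D⁻¹ * C).mulVec (fun _ => (1 : ℝ))
        = -(B.mulVec (fun _ => (1 : ℝ))) := by
      rw [Matrix.mul_assoc, ← Matrix.mulVec_mulVec, ← Matrix.mulVec_mulVec, hC1,
        Matrix.mulVec_neg, Matrix.mulVec_mulVec, hDD',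
        Matrix.one_mulVec, Matrix.mulVec_neg]
    rw [Matrix.mulVec_smul, Matrix.sub_mulVec, key]
    have hA1 : A.mulVec (fun _ => (1 : ℝ)) = -(B.mulVec (fun _ => (1 : ℝ))) := by
      linear_combination (norm := module) h1
    rw [hA1]
    simp
end
end

section
/- Let P₁, P₂ ∈ ℝ^{p×p} be orthogonal projection matrices (Pᵢᵀ = Pᵢ, Pᵢ² = Pᵢ) with ranges C₁, C₂ ⊆ ℝ^p, and let 0 ≤ ω < 1. Suppose that for every N ∈ ℝ^{p×p} with ‖N‖₂ ≤ 1 one has ‖(I−P₁)N(I−P₁) − (I−P₂)N(I−P₂)‖₂ ≤ ω, i.e. ρ(T(C₁), T(C₂)) ≤ ω. Then ‖P₁ − P₂‖₂ ≤ ω. -/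
/-! Testing `N = 1` suffices: for an idempotent `P`, `(1 - P) * 1 * (1 - P) = 1 - P`, so the
difference of the two complementary projections of `1` is `P₂ - P₁`. -/

open Matrix

noncomputable section

/-- The spectral norm (ℓ² → ℓ² operator norm) of a real square matrix. -/
def spec {n : Type*} [Fintype n] [DecidableEq n] (M : Matrix n n ℝ) : ℝ :=
  ‖Matrix.toEuclideanCLM (𝕜 := ℝ) M‖

section

variable {n : Type*} [Fintype n] [DecidableEq n]

lemma spec_one_le : spec (1 : Matrix n n ℝ) ≤ 1 := by
  rw [spec, _root_.map_one, ContinuousLinearMap.one_def]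
  exact ContinuousLinearMap.norm_id_le

lemma spec_sub_comm (A B : Matrix n n ℝ) : spec (A - B) = spec (B - A) := by
  simp only [spec, map_sub, norm_sub_rev]

end

theorem proj_dist_le_of_tangent_dist_general
    (p : ℕ) (P₁ P₂ : Matrix (Fin p) (Fin p) ℝ) (ω : ℝ)
    (h1idem : P₁ * P₁ = P₁)
    (h2idem : P₂ * P₂ = P₂)
    (hρ : ∀ N : Matrix (Fin p) (Fin p) ℝ, spec N ≤ 1 →
      spec ((1 - P₁) * N * (1 - P₁) - (1 - P₂) * N * (1 - P₂)) ≤ ω) :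
    spec (P₁ - P₂) ≤ ω := by
  have h := hρ 1 spec_one_le
  rwa [mul_one, mul_one, (IsIdempotentElem.one_sub h1idem).eq,
    (IsIdempotentElem.one_sub h2idem).eq, sub_sub_sub_cancel_left, spec_sub_comm] at h

/-- **Lemma.** If the distance between the tangent spaces associated to two orthogonal
projections `P₁, P₂` is at most `ω < 1`, then `‖P₁ − P₂‖₂ ≤ ω`. -/
theorem proj_dist_le_of_tangent_dist
    (p : ℕ) (P₁ P₂ : Matrix (Fin p) (Fin p) ℝ) (ω : ℝ)
    (h1sym : P₁ᵀ = P₁) (h1idem : P₁ * P₁ = P₁)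
    (h2sym : P₂ᵀ = P₂) (h2idem : P₂ * P₂ = P₂)
    (hω0 : 0 ≤ ω) (hω1 : ω < 1)
    (hρ : ∀ N : Matrix (Fin p) (Fin p) ℝ, spec N ≤ 1 →
      spec ((1 - P₁) * N * (1 - P₁) - (1 - P₂) * N * (1 - P₂)) ≤ ω) :
    spec (P₁ - P₂) ≤ ω :=
  proj_dist_le_of_tangent_dist_general p P₁ P₂ ω h1idem h2idem hρ
end
end

section
/- Let Θ ∈ ℝ^{d×d} be a symmetric matrix with Θ𝟙_d = 0 whose kernel is exactly the span of 𝟙_d, let Θ⁺ be its Moore–Penrose pseudoinverse, and let t > 0. Then Θ + t𝟙_d𝟙_dᵀ is invertible and (Θ + t𝟙_d𝟙_dᵀ)^{-1} = Θ⁺ + (1/(t d²))𝟙_d𝟙_dᵀ. -/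
open Matrix

noncomputable section

/-- **Lemma.** If `Θ` is symmetric with `Θ𝟙_d = 0` and kernel exactly `span 𝟙_d`, then for any
`t > 0`, `Θ + t𝟙𝟙ᵀ` is invertible and `(Θ + t𝟙𝟙ᵀ)⁻¹ = Θ⁺ + (1/(td²))𝟙𝟙ᵀ`. -/
theorem inv_add_ones
    (d : ℕ) (Θ : Matrix (Fin d) (Fin d) ℝ)
    (hsym : Θ.IsSymm)
    (hones : Θ.mulVec (fun _ => (1 : ℝ)) = 0)
    (hker : ∀ v : Fin d → ℝ,
      Θ.mulVec v = 0 ↔ ∃ c : ℝ, v = c • (fun _ => (1 : ℝ)))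
    (t : ℝ) (ht : 0 < t)
    (X : Matrix (Fin d) (Fin d) ℝ) (hX : IsMoorePenrose Θ X) :
    IsUnit (Θ + t • onesMat (Fin d)).det ∧
    (Θ + t • onesMat (Fin d))⁻¹ = X + (1 / (t * (d : ℝ) ^ 2)) • onesMat (Fin d) := by
  rcases Nat.eq_zero_or_pos d with hd | hd
  · subst hd
    refine ⟨by simp, Subsingleton.elim _ _⟩
  have hd0 : (d : ℝ) ≠ 0 := Nat.cast_ne_zero.mpr hd.ne'
  have ht0 : t ≠ 0 := ht.ne'
  set J : Matrix (Fin d) (Fin d) ℝ := onesMat (Fin d) with hJ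
  -- row sums of Θ vanish
  have hrow : ∀ i, ∑ k, Θ i k = 0 := by
    intro i
    have := congrFun hones i
    simpa [Matrix.mulVec, dotProduct] using this
  have hΘJ : Θ * J = 0 := by
    ext i j
    simp [Matrix.mul_apply, hJ, onesMat, hrow i]
  have hJΘ : J * Θ = 0 := by
    ext i j
    have : ∀ k, Θ k j = Θ j k := fun k => by
      conv_lhs => rw [← hsym]
      rfl
    simp [Matrix.mul_apply, hJ, onesMat, this, hrow j]
  have hJJ : J * J = (d : ℝ) • J := by
    ext i j
    simp [Matrix.mul_apply, hJ, onesMat]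
  have hXJ : X * J = 0 := by
    have h1 : X * J = X * (Θ * X) * J := by
      rw [← mul_assoc, hX.2.1]
    rw [h1, ← hX.2.2.1, Matrix.transpose_mul, hsym.eq, mul_assoc, mul_assoc, hΘJ,
      Matrix.mul_zero, Matrix.mul_zero]
  -- X * Θ = 1 - (1/d) J
  have hM : Θ * (X * Θ - 1) = 0 := by
    rw [Matrix.mul_sub, Matrix.mul_one, ← mul_assoc, hX.1, sub_self]
  have hcol : ∀ j, ∃ cj : ℝ, (fun i => (X * Θ - 1) i j) = cj • (fun _ => (1 : ℝ)) := by
    intro j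
    apply (hker _).mp
    funext i
    have := congrFun (congrFun hM i) j
    simpa [Matrix.mulVec, dotProduct, Matrix.mul_apply] using this
  choose c hc using hcol
  have hentry : ∀ i j, (X * Θ) i j = (if i = j then (1:ℝ) else 0) + c j := by
    intro i j
    have := congrFun (hc j) i
    simp only [Matrix.sub_apply, Matrix.one_apply, Pi.smul_apply, smul_eq_mul, mul_one] at this
    linarith
  have hsymXΘ : ∀ i j, (X * Θ) i j = (X * Θ) j i := by
    intro i j
    conv_lhs => rw [← hX.2.2.2]
    rfl
  have hceq : ∀ i j, c i = c j := by
    intro i j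
    by_cases h : i = j
    · rw [h]
    · have h1 := hentry i j
      have h2 := hentry j i
      rw [hsymXΘ i j] at h1
      simp [h, Ne.symm h] at h1 h2
      linarith [h1, h2]
  obtain ⟨i₀⟩ := Fin.pos_iff_nonempty.mp hd
  have hsum : (1 : ℝ) + (d : ℝ) * c i₀ = 0 := by
    have h0 : (X * Θ).mulVec (fun _ => (1:ℝ)) = 0 := by
      rw [← Matrix.mulVec_mulVec, hones, Matrix.mulVec_zero]
    have := congrFun h0 i₀
    simp only [Matrix.mulVec, dotProduct, mul_one, Pi.zero_apply] at this
    have hrw : ∀ j, (X * Θ) i₀ j = (if i₀ = j then (1:ℝ) else 0) + c i₀ := by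
      intro j; rw [hentry i₀ j, hceq j i₀]
    rw [Finset.sum_congr rfl (fun j _ => hrw j)] at this
    rw [Finset.sum_add_distrib, Finset.sum_ite_eq Finset.univ i₀ (fun _ => (1:ℝ))] at this
    simpa [Finset.card_univ, mul_comm] using this
  have hcval : c i₀ = -(d : ℝ)⁻¹ := by
    field_simp at hsum ⊢
    linarith
  have hXΘ : X * Θ = 1 - (d : ℝ)⁻¹ • J := by
    ext i j
    rw [hentry i j, hceq j i₀, hcval]
    simp [hJ, onesMat, Matrix.one_apply, sub_eq_add_neg]
  -- left inverse
  have hleft : (X + (1 / (t * (d : ℝ) ^ 2)) • J) * (Θ + t • J) = 1 := by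
    rw [Matrix.add_mul, Matrix.mul_add, Matrix.mul_add, Matrix.smul_mul, Matrix.smul_mul,
      Matrix.mul_smul, Matrix.mul_smul, hXJ, hJΘ, hJJ, hXΘ, smul_zero, smul_zero, add_zero,
      zero_add, smul_smul, smul_smul]
    have : 1 / (t * (d : ℝ) ^ 2) * t * (d : ℝ) = (d : ℝ)⁻¹ := by
      field_simp
    rw [this, sub_add_cancel]
  exact ⟨Matrix.isUnit_det_of_left_inverse hleft, Matrix.inv_eq_left_inv hleft⟩
end
end

section
/- Let p ≥ 2 and let U ∈ ℝ^{p×(p−1)} satisfy UᵀU = I_{p−1} and UUᵀ = Π_p. Let Γ ∈ ℝ^{p×p} be symmetric with vᵀΓv < 0 for every nonzero v ∈ ℝ^p orthogonal to 𝟙_p (so that Uᵀ(−Γ/2)U is positive definite). Define Θ̂ := U(Uᵀ(−Γ/2)U)^{-1}Uᵀ. Then Θ̂ is symmetric positive semidefinite with Θ̂𝟙_p = 0, and Θ̂ is the unique minimizer of the surrogate negative log-likelihood: for every symmetric positive semidefinite Θ ∈ ℝ^{p×p} with Θ𝟙_p = 0 and UᵀΘU positive definite and Θ ≠ Θ̂,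 one has −log det(UᵀΘ̂U) − (1/2)tr(Θ̂Γ) < −log det(UᵀΘU) − (1/2)tr(ΘΓ). -/
open Matrix

noncomputable section

/-- The surrogate negative log-likelihood `−log det(UᵀΘU) − (1/2)tr(ΘΓ)`. -/
def surrogateNLL {p r : ℕ} (U : Matrix (Fin p) (Fin r) ℝ)
    (Γ Θ : Matrix (Fin p) (Fin p) ℝ) : ℝ :=
  -Real.log (Uᵀ * Θ * U).det - (1 / 2) * (Θ * Γ).trace


lemma log_det_lt_trace {n : ℕ} {M : Matrix (Fin n) (Fin n) ℝ}
    (hM : M.PosSemidef) (hdet : M.det ≠ 0) (hne : M ≠ 1) :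
    Real.log M.det < M.trace - n := by
  have hH := hM.1
  set μ := hH.eigenvalues with hμ
  have hdetp : M.det = ∏ i, μ i := by simpa using hH.det_eq_prod_eigenvalues
  have hVV : (star (hH.eigenvectorUnitary : Matrix (Fin n) (Fin n) ℝ)) *
      (hH.eigenvectorUnitary : Matrix (Fin n) (Fin n) ℝ) = 1 := by
    exact Matrix.mem_unitaryGroup_iff'.mp hH.eigenvectorUnitary.2
  have hVV' : (hH.eigenvectorUnitary : Matrix (Fin n) (Fin n) ℝ) *
      (star (hH.eigenvectorUnitary : Matrix (Fin n) (Fin n) ℝ)) = 1 := by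
    exact Matrix.mem_unitaryGroup_iff.mp hH.eigenvectorUnitary.2
  have htr : M.trace = ∑ i, μ i := by
    conv_lhs => rw [hH.spectral_theorem, Unitary.conjStarAlgAut_apply]
    rw [trace_mul_cycle, hVV, one_mul, trace_diagonal]
    simp [hμ]
  have hμ0 : ∀ i, μ i ≠ 0 := by
    intro i hi
    apply hdet
    rw [hdetp]
    exact Finset.prod_eq_zero (Finset.mem_univ i) hi
  have hμpos : ∀ i, 0 < μ i := fun i => (hM.eigenvalues_nonneg i).lt_of_ne' (hμ0 i)
  have hexists : ∃ j, μ j ≠ 1 := by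
    by_contra h
    push_neg at h
    apply hne
    have hd : diagonal (RCLike.ofReal ∘ μ) = (1 : Matrix (Fin n) (Fin n) ℝ) := by
      have : RCLike.ofReal ∘ μ = fun _ : Fin n => (1 : ℝ) := funext fun i => by simp [h i]
      rw [this, diagonal_one]
    rw [hH.spectral_theorem, Unitary.conjStarAlgAut_apply, hd, mul_one, hVV']
  obtain ⟨j, hj⟩ := hexists
  have hlog : Real.log M.det = ∑ i, Real.log (μ i) := by
    rw [hdetp, Real.log_prod (fun i _ => hμ0 i)]
  rw [hlog, htr]
  have hsum : ∑ i, Real.log (μ i) < ∑ i, (μ i - 1) := by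
    refine Finset.sum_lt_sum (fun i _ => Real.log_le_sub_one_of_pos (hμpos i)) ⟨j, Finset.mem_univ j, ?_⟩
    exact Real.log_lt_sub_one_of_pos (hμpos j) hj
  have : ∑ i, (μ i - 1) = (∑ i, μ i) - n := by
    rw [Finset.sum_sub_distrib]
    simp
  linarith

lemma ineq_key {n : ℕ} {A S : Matrix (Fin n) (Fin n) ℝ} (hA : A.PosDef) (hS : S.PosDef)
    (hne : S ≠ A⁻¹) :
    Real.log A.det + n < -Real.log S.det + (S * A).trace := by
  obtain ⟨B, hB0, hBH0⟩ : ∃ B : Matrix (Fin n) (Fin n) ℝ, B * B = A ∧ Bᴴ = B := by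
    open scoped MatrixOrder in
    exact ⟨CFC.sqrt A, CFC.sqrt_mul_sqrt_self A hA.posSemidef.nonneg,
      (CFC.sqrt_nonneg A).posSemidef.1⟩
  have hB : B * B = A := hB0
  have hBH : Bᴴ = B := hBH0
  have hdetB : B.det * B.det = A.det := by rw [← det_mul, hB]
  have hdetBne : B.det ≠ 0 := by
    intro h
    rw [h, mul_zero] at hdetB
    exact hA.det_pos.ne' hdetB.symm
  set M := B * S * B with hMdef
  have hMpsd : M.PosSemidef := by
    have := hS.posSemidef.mul_mul_conjTranspose_same B
    rwa [hBH] at this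
  have hdetM : M.det = A.det * S.det := by
    rw [hMdef, det_mul, det_mul]
    rw [show B.det * S.det * B.det = B.det * B.det * S.det by ring, hdetB]
  have htrM : M.trace = (S * A).trace := by
    rw [hMdef, trace_mul_cycle, hB, trace_mul_comm]
  have hMdetne : M.det ≠ 0 := by
    rw [hdetM]; exact mul_ne_zero hA.det_pos.ne' hS.det_pos.ne'
  have hMne : M ≠ 1 := by
    intro h
    apply hne
    have hBu : IsUnit B.det := hdetBne.isUnit
    have h1 : B⁻¹ * M * B⁻¹ = B⁻¹ * B⁻¹ := by rw [h, mul_one]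
    rw [hMdef, ← mul_assoc, ← mul_assoc, nonsing_inv_mul B hBu, one_mul, mul_assoc,
      mul_nonsing_inv B hBu, mul_one] at h1
    rw [h1, ← Matrix.mul_inv_rev, hB]
  have key := log_det_lt_trace hMpsd hMdetne hMne
  rw [hdetM, Real.log_mul hA.det_pos.ne' hS.det_pos.ne', htrM] at key
  linarith

/-- **Proposition (surrogate MLE).** `Θ̂ = U(Uᵀ(−Γ/2)U)⁻¹Uᵀ` is symmetric PSD with
`Θ̂𝟙_p = 0` and is the unique minimizer of the surrogate negative log-likelihood over all
symmetric PSD matrices `Θ` with `Θ𝟙_p = 0` and `UᵀΘU` positive definite. -/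
theorem surrogate_mle
    (p : ℕ) (hp : 2 ≤ p) (U : Matrix (Fin p) (Fin (p - 1)) ℝ)
    (hUtU : Uᵀ * U = 1) (hUUt : U * Uᵀ = projMat (Fin p))
    (Γ : Matrix (Fin p) (Fin p) ℝ) (hΓsym : Γ.IsSymm)
    (hΓneg : ∀ v : Fin p → ℝ, v ≠ 0 → v ⬝ᵥ (fun _ => (1 : ℝ)) = 0 →
      v ⬝ᵥ Γ.mulVec v < 0) :
    let Θhat := U * (Uᵀ * ((-(1/2 : ℝ)) • Γ) * U)⁻¹ * Uᵀ
    Θhat.PosSemidef ∧ Θhat.mulVec (fun _ => (1 : ℝ)) = 0 ∧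
    ∀ Θ : Matrix (Fin p) (Fin p) ℝ, Θ.PosSemidef →
      Θ.mulVec (fun _ => (1 : ℝ)) = 0 → (Uᵀ * Θ * U).PosDef → Θ ≠ Θhat →
      surrogateNLL U Γ Θhat < surrogateNLL U Γ Θ := by
  intro Θhat
  have hpR : (p : ℝ) ≠ 0 := Nat.cast_ne_zero.mpr (by omega)
  set A := Uᵀ * ((-(1/2 : ℝ)) • Γ) * U with hAdef
  have hThat : Θhat = U * A⁻¹ * Uᵀ := rfl
  have hPone : projMat (Fin p) *ᵥ (fun _ => (1 : ℝ)) = 0 := by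
    funext i
    simp only [projMat, onesMat, sub_mulVec, smul_mulVec, one_mulVec, Pi.sub_apply,
      Pi.smul_apply, Fintype.card_fin, Pi.zero_apply, smul_eq_mul]
    rw [show (Matrix.of fun _ _ => (1:ℝ)) *ᵥ (fun _ => (1:ℝ)) = fun _ : Fin p => (p : ℝ) from ?_]
    · field_simp; ring
    · funext k
      simp [mulVec, dotProduct]
  have hUtP : Uᵀ = Uᵀ * projMat (Fin p) := by
    rw [← hUUt, ← Matrix.mul_assoc, hUtU, Matrix.one_mul]
  have hUtone : Uᵀ *ᵥ (fun _ => (1 : ℝ)) = 0 := by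
    rw [hUtP, ← mulVec_mulVec, hPone, mulVec_zero]
  have hΓt : Γᵀ = Γ := hΓsym
  -- A is positive definite
  have hA : A.PosDef := by
    refine Matrix.PosDef.of_dotProduct_mulVec_pos ?_ ?_
    · show Aᴴ = A
      rw [conjTranspose_eq_transpose_of_trivial, hAdef]
      simp [transpose_mul, transpose_smul, hΓt, Matrix.mul_assoc]
    · intro x hx
      have hUx : U *ᵥ x ≠ 0 := by
        intro h
        apply hx
        have h2 := congrArg (fun v => Uᵀ *ᵥ v) h
        simpa [mulVec_mulVec, hUtU] using h2
      have horto : (U *ᵥ x) ⬝ᵥ (fun _ => (1 : ℝ)) = 0 := by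
        rw [dotProduct_comm, dotProduct_mulVec, ← mulVec_transpose, hUtone, zero_dotProduct]
      have h2 := hΓneg (U *ᵥ x) hUx horto
      have hsx : star x = x := by simp
      have hAx : A *ᵥ x = Uᵀ *ᵥ (((-(1/2 : ℝ)) • Γ) *ᵥ (U *ᵥ x)) := by
        rw [hAdef, ← mulVec_mulVec, ← mulVec_mulVec]
      have e : star x ⬝ᵥ (A *ᵥ x) = -(1/2) * ((U *ᵥ x) ⬝ᵥ (Γ *ᵥ (U *ᵥ x))) := by
        rw [hsx, hAx, dotProduct_mulVec, vecMul_transpose, smul_mulVec,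
          dotProduct_smul, smul_eq_mul]
      rw [e]
      linarith
  have hAunit : IsUnit A.det := hA.det_pos.ne'.isUnit
  have hAinvA : A⁻¹ * A = 1 := nonsing_inv_mul A hAunit
  refine ⟨?_, ?_, ?_⟩
  · -- PSD
    rw [hThat]
    have := hA.inv.posSemidef.mul_mul_conjTranspose_same U
    rwa [conjTranspose_eq_transpose_of_trivial] at this
  · rw [hThat, ← mulVec_mulVec, hUtone, mulVec_zero]
  · intro Θ hΘ hΘone hSpd hΘne
    set S := Uᵀ * Θ * U with hSdef
    have hΘt : Θᵀ = Θ := by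
      rw [← conjTranspose_eq_transpose_of_trivial]; exact hΘ.1
    have hrow : Θ * onesMat (Fin p) = 0 := by
      ext i j
      simp only [mul_apply, onesMat, of_apply, mul_one, Matrix.zero_apply]
      simpa [mulVec, dotProduct] using congrFun hΘone i
    have hcol : onesMat (Fin p) * Θ = 0 := by
      ext i j
      simp only [mul_apply, onesMat, of_apply, one_mul, Matrix.zero_apply]
      have := congrFun hΘone j
      simp only [mulVec, dotProduct, mul_one, Pi.zero_apply] at this
      rw [← this]
      exact Finset.sum_congr rfl fun k _ => by nth_rewrite 1 [← hΘt]; rfl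
    have hProjT : projMat (Fin p) * Θ = Θ := by
      rw [projMat, sub_mul, one_mul, smul_mul_assoc, hcol, smul_zero, sub_zero]
    have hTProj : Θ * projMat (Fin p) = Θ := by
      rw [projMat, mul_sub, mul_one, mul_smul_comm, hrow, smul_zero, sub_zero]
    have hrep : U * S * Uᵀ = Θ := by
      rw [hSdef]
      calc U * (Uᵀ * Θ * U) * Uᵀ = (U * Uᵀ) * Θ * (U * Uᵀ) := by
            simp only [Matrix.mul_assoc]
        _ = Θ := by rw [hUUt, hProjT, hTProj]
    have hSne : S ≠ A⁻¹ := by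
      intro h
      apply hΘne
      rw [← hrep, h, hThat]
    -- trace identities
    have hUtΓU : Uᵀ * Γ * U = (-2 : ℝ) • A := by
      rw [hAdef, Matrix.mul_smul, Matrix.smul_mul, smul_smul]
      norm_num
    have htraceΘ : ∀ T : Matrix (Fin (p-1)) (Fin (p-1)) ℝ,
        ((U * T * Uᵀ) * Γ).trace = -2 * (T * A).trace := by
      intro T
      rw [Matrix.mul_assoc (U * T) Uᵀ Γ, trace_mul_cycle, hUtΓU, Matrix.smul_mul,
        trace_smul, trace_mul_comm]
      simp
    have hShat : Uᵀ * Θhat * U = A⁻¹ := by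
      rw [hThat]
      calc Uᵀ * (U * A⁻¹ * Uᵀ) * U = (Uᵀ * U) * A⁻¹ * (Uᵀ * U) := by
            simp only [Matrix.mul_assoc]
        _ = A⁻¹ := by rw [hUtU, one_mul, mul_one]
    have hcard : ((Fintype.card (Fin (p-1))) : ℝ) = ((p : ℝ) - 1) := by
      rw [Fintype.card_fin]
      have : (1:ℕ) ≤ p := by omega
      push_cast [this]
      ring
    have key := ineq_key hA hSpd hSne
    have hdetinv : Real.log (A⁻¹).det = - Real.log A.det := by
      rw [det_nonsing_inv, Ring.inverse_eq_inv', Real.log_inv]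
    have e1 : surrogateNLL U Γ Θhat = Real.log A.det + ((p:ℝ) - 1) := by
      rw [surrogateNLL, hShat, hThat, htraceΘ, hAinvA, trace_one, hcard, hdetinv]
      ring
    have e2 : surrogateNLL U Γ Θ = -Real.log S.det + (S * A).trace := by
      rw [surrogateNLL, ← hSdef, ← hrep, htraceΘ]
      ring
    have hc2 : ((p - 1 : ℕ) : ℝ) = (p : ℝ) - 1 := by
      have h1 : (1:ℕ) ≤ p := by omega
      push_cast [h1]
      ring
    rw [e1, e2, ← hc2]
    rw [show ((p - 1 : ℕ) : ℝ) = ((p - 1 : ℕ) : ℝ) from rfl] at key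
    rw [hc2] at key
    rw [hc2]
    linarith
end
end
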